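/- For fixed x > 0 and positive integer d, the function N ↦ DKhi(d, N, x) := (1/d)·E[(X_d − x·X'_N/N)_+] is nonincreasing in the positive integer N, where X_d and X'_N are independent chi-squared variables with d and N degrees of freedom. -/

import Mathlib

/-!
Let `h(s) = 𝔼[(X_d - s)₊]` be the stop-loss transform of `χ²_d`; it is convex and nonincreasing,
and by Fubini the quantity in question is `𝔼[h(x T_N / N)] / d` with `T_N ∼ χ²_N`.
If `B ∼ Beta(N/2, 1/2)` is independent of `T_{N+1} ∼ χ²_{N+1}`, then `B T_{N+1} ∼ χ²_N` and
`𝔼[B] = N / (N + 1)`. Jensen's inequality in `B`, conditionally on `T_{N+1}`, therefore gives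
`𝔼[h(x T_{N+1} / (N + 1))] ≤ 𝔼[h(x T_N / N)]`.
-/

open MeasureTheory ProbabilityTheory Real

/-- The chi-squared distribution with `k` degrees of freedom, as the
Gamma distribution with shape `k/2` and rate `1/2`. -/
noncomputable def chiSqMeasure (k : ℕ) : Measure ℝ :=
  gammaMeasure ((k : ℝ) / 2) (1 / 2)

open Set
open scoped ENNReal

theorem ofReal_integral_le_lintegral_ofReal {α : Type*} [MeasurableSpace α] {μ : Measure α}
    {f : α → ℝ} (hf : Integrable f μ) :
    ENNReal.ofReal (∫ a, f a ∂μ) ≤ ∫⁻ a, ENNReal.ofReal (f a) ∂μ := by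
  rw [integral_eq_lintegral_pos_part_sub_lintegral_neg_part hf]
  exact (ENNReal.ofReal_le_ofReal (sub_le_self _ ENNReal.toReal_nonneg)).trans
    ENNReal.ofReal_toReal_le

theorem lintegral_comp_mul_left (F : ℝ → ℝ≥0∞) {b : ℝ} (hb : b ≠ 0) :
    ∫⁻ t, F (b * t) = ENNReal.ofReal |b⁻¹| * ∫⁻ u, F u := by
  have h := lintegral_map_equiv F (Homeomorph.mulLeft₀ b hb).toMeasurableEquiv (μ := volume)
  rw [Homeomorph.toMeasurableEquiv_coe, Homeomorph.coe_mulLeft₀, Real.map_volume_mul_left hb,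
    lintegral_smul_measure] at h
  exact h.symm

/-- `stopLoss μ s = 𝔼[(Z - s)₊]` for `Z ∼ μ`; `ENNReal.ofReal` takes the positive part. -/
noncomputable def stopLoss (μ : Measure ℝ) (s : ℝ) : ℝ :=
  (∫⁻ z, ENNReal.ofReal (z - s) ∂μ).toReal

section StopLoss

variable {μ : Measure ℝ} [IsFiniteMeasure μ] (hμ : ∫⁻ z, ENNReal.ofReal z ∂μ ≠ ∞)
include hμ

theorem lintegral_ofReal_sub_ne_top (s : ℝ) : ∫⁻ z, ENNReal.ofReal (z - s) ∂μ ≠ ∞ := by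
  have hle : ∀ z, ENNReal.ofReal (z - s) ≤ ENNReal.ofReal z + ENNReal.ofReal (-s) := fun z => by
    simpa only [sub_eq_add_neg] using ENNReal.ofReal_add_le
  refine ne_top_of_le_ne_top ?_ (lintegral_mono hle)
  rw [lintegral_add_right _ measurable_const, lintegral_const]
  exact ENNReal.add_ne_top.2 ⟨hμ, ENNReal.mul_ne_top ENNReal.ofReal_ne_top (measure_ne_top _ _)⟩

theorem ofReal_stopLoss (s : ℝ) :
    ENNReal.ofReal (stopLoss μ s) = ∫⁻ z, ENNReal.ofReal (z - s) ∂μ :=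
  ENNReal.ofReal_toReal (lintegral_ofReal_sub_ne_top hμ s)

theorem antitone_stopLoss : Antitone (stopLoss μ) := fun _ _ hst =>
  ENNReal.toReal_mono (lintegral_ofReal_sub_ne_top hμ _)
    (lintegral_mono fun _ => ENNReal.ofReal_le_ofReal (by linarith))

theorem convexOn_stopLoss : ConvexOn ℝ univ (stopLoss μ) := by
  refine ⟨convex_univ, fun p _ q _ a b ha hb hab => ?_⟩
  have hpointwise : ∀ z, ENNReal.ofReal (z - (a • p + b • q))
      ≤ ENNReal.ofReal a * ENNReal.ofReal (z - p) + ENNReal.ofReal b * ENNReal.ofReal (z - q) := by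
    intro z
    have hz : z - (a • p + b • q) = a * (z - p) + b * (z - q) := by
      simp only [smul_eq_mul]; linear_combination (-z) * hab
    rw [hz, ← ENNReal.ofReal_mul ha, ← ENNReal.ofReal_mul hb]
    exact ENNReal.ofReal_add_le
  have hp := lintegral_ofReal_sub_ne_top hμ p
  have hq := lintegral_ofReal_sub_ne_top hμ q
  have hmeas : ∀ s : ℝ, Measurable fun z : ℝ => ENNReal.ofReal (z - s) := fun s => by fun_prop
  calc stopLoss μ (a • p + b • q)
      ≤ (ENNReal.ofReal a * ∫⁻ z, ENNReal.ofReal (z - p) ∂μ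
          + ENNReal.ofReal b * ∫⁻ z, ENNReal.ofReal (z - q) ∂μ).toReal := by
        refine ENNReal.toReal_mono (by finiteness) ?_
        rw [← lintegral_const_mul _ (hmeas p), ← lintegral_const_mul _ (hmeas q),
          ← lintegral_add_left ((hmeas p).const_mul _)]
        exact lintegral_mono hpointwise
    _ = a • stopLoss μ p + b • stopLoss μ q := by
        rw [ENNReal.toReal_add (by finiteness) (by finiteness), ENNReal.toReal_mul,
          ENNReal.toReal_mul, ENNReal.toReal_ofReal ha, ENNReal.toReal_ofReal hb]
        rfl

theorem lintegral_ofReal_stopLoss_ne_top {ν : Measure ℝ} [IsFiniteMeasure ν] {f : ℝ → ℝ}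
    (hf : ∀ᵐ t ∂ν, 0 ≤ f t) : ∫⁻ t, ENNReal.ofReal (stopLoss μ (f t)) ∂ν ≠ ∞ := by
  refine ne_top_of_le_ne_top (b := ∫⁻ _, ENNReal.ofReal (stopLoss μ 0) ∂ν) ?_
    (lintegral_mono_ae (hf.mono fun t ht => ENNReal.ofReal_le_ofReal (antitone_stopLoss hμ ht)))
  rw [lintegral_const]
  exact ENNReal.mul_ne_top ENNReal.ofReal_ne_top (measure_ne_top _ _)

theorem integral_prod_max_sub_eq_stopLoss {ν : Measure ℝ} [SFinite ν] {f : ℝ → ℝ}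
    (hf : Measurable f) :
    ∫ q, max (q.1 - f q.2) 0 ∂(μ.prod ν) = (∫⁻ t, ENNReal.ofReal (stopLoss μ (f t)) ∂ν).toReal := by
  have hmeas : Measurable fun q : ℝ × ℝ => q.1 - f q.2 := by fun_prop
  rw [integral_eq_lintegral_of_nonneg_ae (f := fun q : ℝ × ℝ => max (q.1 - f q.2) 0)
    (ae_of_all _ fun _ => le_max_right _ _) (hmeas.max measurable_const).aestronglyMeasurable]
  simp only [ENNReal.ofReal_max, ENNReal.ofReal_zero, zero_le, sup_of_le_left]
  rw [lintegral_prod_symm _ hmeas.ennreal_ofReal.aemeasurable]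
  simp only [ofReal_stopLoss hμ]

end StopLoss

theorem measurable_gammaPDF (a r : ℝ) : Measurable (gammaPDF a r) :=
  (measurable_gammaPDFReal a r).ennreal_ofReal

theorem ae_nonneg_gammaMeasure (a r : ℝ) : ∀ᵐ t ∂gammaMeasure a r, 0 ≤ t := by
  refine (ae_withDensity_iff (measurable_gammaPDF a r)).2 (ae_of_all _ fun t ht => ?_)
  by_contra hneg
  exact ht (gammaPDF_of_neg (not_le.1 hneg))

theorem setLIntegral_gammaPDF_Ioi {a r : ℝ} (ha : 0 < a) (hr : 0 < r) :
    ∫⁻ t in Ioi 0, gammaPDF a r t = 1 := by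
  have h := lintegral_add_compl (μ := volume) (gammaPDF a r) (measurableSet_Ioi (a := (0 : ℝ)))
  rwa [compl_Ioi, ← setLIntegral_congr Iio_ae_eq_Iic, lintegral_gammaPDF_of_nonpos le_rfl,
    add_zero, lintegral_gammaPDF_eq_one ha hr] at h

theorem mul_gammaPDFReal {a r : ℝ} (ha : 0 < a) (hr : 0 < r) (x : ℝ) :
    x * gammaPDFReal a r x = a / r * gammaPDFReal (a + 1) r x := by
  unfold gammaPDFReal
  split_ifs with hx
  · have hxa : x ^ (a - 1) * x = x ^ a := by
      rw [← rpow_add_one' hx (by simpa using ha.ne'), sub_add_cancel]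
    rw [add_sub_cancel_right, Gamma_add_one ha.ne', rpow_add_one hr.ne', ← hxa]
    field_simp
  · simp

theorem lintegral_ofReal_gammaMeasure {a r : ℝ} (ha : 0 < a) (hr : 0 < r) :
    ∫⁻ x, ENNReal.ofReal x ∂gammaMeasure a r = ENNReal.ofReal (a / r) := by
  have hshift : ∀ x, gammaPDF a r x * ENNReal.ofReal x
      = ENNReal.ofReal (a / r) * gammaPDF (a + 1) r x := fun x => by
    rw [gammaPDF, gammaPDF, ← ENNReal.ofReal_mul (gammaPDFReal_nonneg ha hr x), mul_comm,
      mul_gammaPDFReal ha hr, ENNReal.ofReal_mul (by positivity)]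
  rw [gammaMeasure,
    lintegral_withDensity_eq_lintegral_mul _ (measurable_gammaPDF a r) (by fun_prop)]
  simp only [Pi.mul_apply, hshift]
  rw [lintegral_const_mul _ (measurable_gammaPDF _ r),
    lintegral_gammaPDF_eq_one (by linarith) hr, mul_one]

theorem measurable_betaPDF (a c : ℝ) : Measurable (betaPDF a c) :=
  (measurable_betaPDFReal a c).ennreal_ofReal

theorem betaPDFReal_nonneg {a c : ℝ} (ha : 0 < a) (hc : 0 < c) (x : ℝ) : 0 ≤ betaPDFReal a c x := by
  by_cases hx : 0 < x ∧ x < 1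
  · exact (betaPDFReal_pos hx.1 hx.2 ha hc).le
  · simp [betaPDFReal, hx]

theorem ae_mem_Ioo_betaMeasure (a c : ℝ) : ∀ᵐ b ∂betaMeasure a c, b ∈ Ioo 0 1 := by
  refine (ae_withDensity_iff (measurable_betaPDF a c)).2 (ae_of_all _ fun b hb => ?_)
  by_contra hnot
  exact hb (by simp [betaPDF_eq, show ¬(0 < b ∧ b < 1) from hnot])

theorem lintegral_betaMeasure (a c : ℝ) {g : ℝ → ℝ≥0∞} (hg : Measurable g) :
    ∫⁻ b, g b ∂betaMeasure a c = ∫⁻ b in Ioo 0 1, betaPDF a c b * g b := by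
  rw [betaMeasure, lintegral_withDensity_eq_lintegral_mul _ (measurable_betaPDF a c) hg,
    setLIntegral_eq_of_support_subset]
  · rfl
  intro b hb
  by_contra hnot
  exact hb (by simp [betaPDF_eq, show ¬(0 < b ∧ b < 1) from hnot])

theorem mul_betaPDFReal {a c : ℝ} (ha : 0 < a) (hc : 0 < c) (x : ℝ) :
    x * betaPDFReal a c x = a / (a + c) * betaPDFReal (a + 1) c x := by
  unfold betaPDFReal beta
  split_ifs with hx
  · have hxa : x ^ (a - 1) * x = x ^ a := by
      rw [← rpow_add_one' hx.1.le (by simpa using ha.ne'), sub_add_cancel]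
    have hac : a + 1 + c = a + c + 1 := by ring
    have := Gamma_pos_of_pos ha
    have := Gamma_pos_of_pos hc
    have := Gamma_pos_of_pos (add_pos ha hc)
    rw [add_sub_cancel_right, hac, Gamma_add_one ha.ne', Gamma_add_one (by positivity), ← hxa]
    field_simp
  · simp

theorem lintegral_ofReal_betaMeasure {a c : ℝ} (ha : 0 < a) (hc : 0 < c) :
    ∫⁻ x, ENNReal.ofReal x ∂betaMeasure a c = ENNReal.ofReal (a / (a + c)) := by
  have hshift : ∀ x, betaPDF a c x * ENNReal.ofReal x
      = ENNReal.ofReal (a / (a + c)) * betaPDF (a + 1) c x := fun x => by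
    rw [betaPDF, betaPDF, ← ENNReal.ofReal_mul (betaPDFReal_nonneg ha hc x), mul_comm,
      mul_betaPDFReal ha hc, ENNReal.ofReal_mul (by positivity)]
  rw [betaMeasure, lintegral_withDensity_eq_lintegral_mul _ (measurable_betaPDF a c) (by fun_prop)]
  simp only [Pi.mul_apply, hshift]
  rw [lintegral_const_mul _ (measurable_betaPDF _ c),
    lintegral_betaPDF_eq_one (by linarith) hc, mul_one]

theorem integral_id_betaMeasure {a c : ℝ} (ha : 0 < a) (hc : 0 < c) :
    ∫ x, x ∂betaMeasure a c = a / (a + c) := by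
  rw [integral_eq_lintegral_of_nonneg_ae ((ae_mem_Ioo_betaMeasure a c).mono fun _ hx => hx.1.le)
    aestronglyMeasurable_id, lintegral_ofReal_betaMeasure ha hc,
    ENNReal.toReal_ofReal (by positivity)]

theorem Continuous.integrable_betaMeasure {E : Type*} [NormedAddCommGroup E] {a c : ℝ}
    (ha : 0 < a) (hc : 0 < c) {f : ℝ → E} (hf : Continuous f) : Integrable f (betaMeasure a c) := by
  have := isProbabilityMeasureBeta ha hc
  rw [← Measure.restrict_eq_self_of_ae_mem
    ((ae_mem_Ioo_betaMeasure a c).mono fun _ hx => Ioo_subset_Icc_self hx)]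
  exact hf.integrableOn_Icc

/-- The change of variables `(u, w) ↦ (u / (u + w), u + w)`, with Jacobian `1 / (u + w)`. -/
theorem gammaPDFReal_mul_gammaPDFReal {a c r u w : ℝ} (ha : 0 < a) (hc : 0 < c) (hr : 0 < r)
    (hu : 0 < u) (hw : 0 < w) :
    gammaPDFReal a r u * gammaPDFReal c r w
      = betaPDFReal a c (u / (u + w)) * gammaPDFReal (a + c) r (u + w) / (u + w) := by
  have hs : 0 < u + w := by linarith
  have hmem : 0 < u / (u + w) ∧ u / (u + w) < 1 :=
    ⟨by positivity, (div_lt_one hs).2 (by linarith)⟩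
  have hcompl : 1 - u / (u + w) = w / (u + w) := by field_simp; ring
  have hspow : (u + w) ^ (a + c - 1) = (u + w) ^ (a - 1) * (u + w) ^ (c - 1) * (u + w) := by
    rw [← rpow_add hs, ← rpow_add_one hs.ne']; ring_nf
  have hexp : exp (-(r * (u + w))) = exp (-(r * u)) * exp (-(r * w)) := by
    rw [← exp_add]; ring_nf
  have := Gamma_pos_of_pos ha
  have := Gamma_pos_of_pos hc
  have := Gamma_pos_of_pos (add_pos ha hc)
  have := (rpow_pos_of_pos hs (a - 1)).ne'
  have := (rpow_pos_of_pos hs (c - 1)).ne'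
  simp only [gammaPDFReal, betaPDFReal, beta, if_pos hu.le, if_pos hw.le, if_pos hs.le,
    if_pos hmem, hcompl, div_rpow hu.le hs.le, div_rpow hw.le hs.le, hspow, hexp,
    rpow_add hr]
  field_simp

theorem image_div_add_Ioi {u : ℝ} (hu : 0 < u) : (fun w => u / (u + w)) '' Ioi 0 = Ioo 0 1 := by
  ext b
  constructor
  · rintro ⟨w, hw, rfl⟩
    have hs : 0 < u + w := by linarith [mem_Ioi.1 hw]
    exact ⟨by positivity, (div_lt_one hs).2 (by linarith [mem_Ioi.1 hw])⟩
  · rintro ⟨hb0, hb1⟩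
    refine ⟨u / b - u, ?_, ?_⟩
    · rw [mem_Ioi, sub_pos, lt_div_iff₀ hb0]
      nlinarith
    · field_simp
      ring

theorem lintegral_betaPDF_mul_gammaPDF_div {a c r u : ℝ} (ha : 0 < a) (hc : 0 < c) (hr : 0 < r)
    (hu : u ≠ 0) :
    ∫⁻ b in Ioo 0 1, betaPDF a c b * ENNReal.ofReal b⁻¹ * gammaPDF (a + c) r (u / b)
      = gammaPDF a r u := by
  rcases hu.lt_or_gt with hu | hu
  · rw [gammaPDF_of_neg hu, ← lintegral_zero]
    refine setLIntegral_congr_fun measurableSet_Ioo fun b hb => ?_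
    rw [gammaPDF_of_neg (div_neg_of_neg_of_pos hu hb.1), mul_zero]
  have hderiv : ∀ w ∈ Ioi (0 : ℝ),
      HasDerivWithinAt (fun w => u / (u + w)) (-(u / (u + w) ^ 2)) (Ioi 0) w := by
    intro w hw
    have hs : u + w ≠ 0 := by linarith [mem_Ioi.1 hw]
    refine ((hasDerivAt_const w u).div ((hasDerivAt_id w).const_add u) hs).hasDerivWithinAt
      |>.congr_deriv ?_
    simp [neg_div]
  have hanti : AntitoneOn (fun w => u / (u + w)) (Ioi 0) := fun w hw w' _ hww' =>
    div_le_div_of_nonneg_left hu.le (by linarith [mem_Ioi.1 hw]) (by linarith)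
  rw [← image_div_add_Ioi hu, lintegral_image_eq_lintegral_deriv_mul_of_antitoneOn
    measurableSet_Ioi hderiv hanti]
  have hpointwise : ∀ w ∈ Ioi (0 : ℝ),
      ENNReal.ofReal (-(-(u / (u + w) ^ 2))) * (betaPDF a c (u / (u + w))
        * ENNReal.ofReal (u / (u + w))⁻¹ * gammaPDF (a + c) r (u / (u / (u + w))))
      = gammaPDF a r u * gammaPDF c r w := by
    intro w hw
    have hw : 0 < w := hw
    have hs : 0 < u + w := by linarith
    have hB := betaPDFReal_nonneg ha hc (u / (u + w))
    have hG := gammaPDFReal_nonneg (add_pos ha hc) hr (u + w)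
    rw [neg_neg, div_div_cancel₀ hu.ne', inv_div, gammaPDF, gammaPDF, gammaPDF, betaPDF,
      ← ENNReal.ofReal_mul (by positivity), ← ENNReal.ofReal_mul (by positivity),
      ← ENNReal.ofReal_mul (by positivity), ← ENNReal.ofReal_mul (gammaPDFReal_nonneg ha hr u),
      gammaPDFReal_mul_gammaPDFReal ha hc hr hu hw]
    congr 1
    field_simp
  rw [setLIntegral_congr_fun measurableSet_Ioi hpointwise,
    lintegral_const_mul _ (measurable_gammaPDF c r), setLIntegral_gammaPDF_Ioi hc hr, mul_one]

theorem lintegral_gammaMeasure_lintegral_betaMeasure_mul {a c r : ℝ} (ha : 0 < a) (hc : 0 < c)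
    (hr : 0 < r) {g : ℝ → ℝ≥0∞} (hg : Measurable g) :
    ∫⁻ t, ∫⁻ b, g (b * t) ∂betaMeasure a c ∂gammaMeasure (a + c) r
      = ∫⁻ s, g s ∂gammaMeasure a r := by
  have := isProbabilityMeasureBeta ha hc
  have hβ := measurable_betaPDF a c
  have hγ := measurable_gammaPDF (a + c) r
  have hinner : ∀ b ∈ Ioo (0 : ℝ) 1, ∫⁻ t, gammaPDF (a + c) r t * (betaPDF a c b * g (b * t))
      = ∫⁻ u, betaPDF a c b * ENNReal.ofReal b⁻¹ * gammaPDF (a + c) r (u / b) * g u := by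
    intro b hb
    have hscale := lintegral_comp_mul_left
      (fun u => gammaPDF (a + c) r (u / b) * (betaPDF a c b * g u)) hb.1.ne'
    simp only [mul_div_cancel_left₀ _ hb.1.ne', abs_of_pos (inv_pos.2 hb.1)] at hscale
    rw [hscale, ← lintegral_const_mul _ (by fun_prop)]
    exact lintegral_congr fun u => by ring
  calc ∫⁻ t, ∫⁻ b, g (b * t) ∂betaMeasure a c ∂gammaMeasure (a + c) r
      = ∫⁻ t, ∫⁻ b in Ioo 0 1, gammaPDF (a + c) r t * (betaPDF a c b * g (b * t)) := by
        rw [gammaMeasure, lintegral_withDensity_eq_lintegral_mul _ hγ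
          (Measurable.lintegral_prod_right (f := fun t b => g (b * t)) (by fun_prop))]
        refine lintegral_congr fun t => ?_
        rw [Pi.mul_apply, lintegral_betaMeasure a c (by fun_prop),
          lintegral_const_mul _ (by fun_prop)]
    _ = ∫⁻ b in Ioo 0 1, ∫⁻ u, betaPDF a c b * ENNReal.ofReal b⁻¹
          * gammaPDF (a + c) r (u / b) * g u := by
        rw [lintegral_lintegral_swap (by fun_prop)]
        exact setLIntegral_congr_fun measurableSet_Ioo hinner
    _ = ∫⁻ u, (∫⁻ b in Ioo 0 1, betaPDF a c b * ENNReal.ofReal b⁻¹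
          * gammaPDF (a + c) r (u / b)) * g u := by
        rw [lintegral_lintegral_swap (by fun_prop)]
        exact lintegral_congr fun u => lintegral_mul_const _ (by fun_prop)
    _ = ∫⁻ s, g s ∂gammaMeasure a r := by
        rw [gammaMeasure, lintegral_withDensity_eq_lintegral_mul _ (measurable_gammaPDF a r) hg]
        refine lintegral_congr_ae ((Measure.ae_ne volume 0).mono fun u hu => ?_)
        simp only [Pi.mul_apply, lintegral_betaPDF_mul_gammaPDF_div ha hc hr hu]

theorem ConvexOn.lintegral_gammaMeasure_comp_mul_le {a c r : ℝ} {φ : ℝ → ℝ}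
    (hφ : ConvexOn ℝ univ φ) (ha : 0 < a) (hc : 0 < c) (hr : 0 < r) :
    ∫⁻ t, ENNReal.ofReal (φ (a / (a + c) * t)) ∂gammaMeasure (a + c) r
      ≤ ∫⁻ s, ENNReal.ofReal (φ s) ∂gammaMeasure a r := by
  have := isProbabilityMeasureBeta ha hc
  have hφc : Continuous φ := continuousOn_univ.1 (hφ.continuousOn isOpen_univ)
  rw [← lintegral_gammaMeasure_lintegral_betaMeasure_mul ha hc hr (by fun_prop)]
  refine lintegral_mono fun t => ?_
  have hintegrable : Integrable (fun b => φ (b * t)) (betaMeasure a c) :=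
    (hφc.comp (continuous_mul_const t)).integrable_betaMeasure ha hc
  have hjensen : φ (∫ b, b * t ∂betaMeasure a c) ≤ ∫ b, φ (b * t) ∂betaMeasure a c :=
    hφ.map_integral_le hφc.continuousOn isClosed_univ (ae_of_all _ fun _ => mem_univ _)
      ((continuous_mul_const t).integrable_betaMeasure ha hc) hintegrable
  calc ENNReal.ofReal (φ (a / (a + c) * t))
      = ENNReal.ofReal (φ (∫ b, b * t ∂betaMeasure a c)) := by
        rw [integral_mul_const, integral_id_betaMeasure ha hc]
    _ ≤ ENNReal.ofReal (∫ b, φ (b * t) ∂betaMeasure a c) := ENNReal.ofReal_le_ofReal hjensen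
    _ ≤ ∫⁻ b, ENNReal.ofReal (φ (b * t)) ∂betaMeasure a c :=
        ofReal_integral_le_lintegral_ofReal hintegrable

theorem isProbabilityMeasure_chiSqMeasure {k : ℕ} (hk : 0 < k) :
    IsProbabilityMeasure (chiSqMeasure k) :=
  isProbabilityMeasure_gammaMeasure (by positivity) (by norm_num)

section ChiSquared

variable {μ : Measure ℝ} [IsFiniteMeasure μ] (hμ : ∫⁻ z, ENNReal.ofReal z ∂μ ≠ ∞) (x : ℝ)
include hμ

theorem lintegral_stopLoss_chiSqMeasure_succ_le {N : ℕ} (hN : 0 < N) :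
    ∫⁻ t, ENNReal.ofReal (stopLoss μ (x * t / (N + 1 : ℕ))) ∂chiSqMeasure (N + 1)
      ≤ ∫⁻ t, ENNReal.ofReal (stopLoss μ (x * t / N)) ∂chiSqMeasure N := by
  have hNR : (0 : ℝ) < N := Nat.cast_pos.2 hN
  have hconv : ConvexOn ℝ univ fun s => stopLoss μ (x * s / N) := by
    refine ⟨convex_univ, fun p _ q _ a b ha hb hab => ?_⟩
    have h := (convexOn_stopLoss hμ).2 (mem_univ (x * p / N)) (mem_univ (x * q / N)) ha hb hab
    simp only [smul_eq_mul] at h ⊢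
    convert h using 2
    ring
  have hsucc := hconv.lintegral_gammaMeasure_comp_mul_le (a := N / 2) (c := 1 / 2) (r := 1 / 2)
    (by positivity) (by norm_num) (by norm_num)
  have hshape : ((N + 1 : ℕ) : ℝ) / 2 = N / 2 + 1 / 2 := by push_cast; ring
  rw [chiSqMeasure, chiSqMeasure, hshape]
  have harg : ∀ t : ℝ, x * (N / 2 / (N / 2 + 1 / 2) * t) / N = x * t / (N + 1 : ℕ) := by
    intro t
    push_cast
    field_simp
  simpa only [harg] using hsucc

theorem lintegral_stopLoss_chiSqMeasure_le {N₁ N₂ : ℕ} (hN₁ : 0 < N₁) (h : N₁ ≤ N₂) :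
    ∫⁻ t, ENNReal.ofReal (stopLoss μ (x * t / N₂)) ∂chiSqMeasure N₂
      ≤ ∫⁻ t, ENNReal.ofReal (stopLoss μ (x * t / N₁)) ∂chiSqMeasure N₁ := by
  induction N₂, h using Nat.le_induction with
  | base => exact le_rfl
  | succ N hN ih => exact (lintegral_stopLoss_chiSqMeasure_succ_le hμ x (hN₁.trans_le hN)).trans ih

end ChiSquared

theorem DKhi_anti_in_N (d : ℕ) (hd : 0 < d) (x : ℝ) (hx : 0 < x)
    (N₁ N₂ : ℕ) (hN₁ : 0 < N₁) (h : N₁ ≤ N₂) :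
    (1 / (d : ℝ)) *
        ∫ q : ℝ × ℝ, max (q.1 - x * q.2 / N₂) 0
          ∂((chiSqMeasure d).prod (chiSqMeasure N₂)) ≤
      (1 / (d : ℝ)) *
        ∫ q : ℝ × ℝ, max (q.1 - x * q.2 / N₁) 0
          ∂((chiSqMeasure d).prod (chiSqMeasure N₁)) := by
  have := isProbabilityMeasure_chiSqMeasure hd
  have := isProbabilityMeasure_chiSqMeasure hN₁
  have := isProbabilityMeasure_chiSqMeasure (hN₁.trans_le h)
  have hμ : ∫⁻ z, ENNReal.ofReal z ∂chiSqMeasure d ≠ ∞ := by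
    rw [chiSqMeasure, lintegral_ofReal_gammaMeasure (by positivity) (by norm_num)]
    exact ENNReal.ofReal_ne_top
  have hnonneg : ∀ᵐ t ∂chiSqMeasure N₁, 0 ≤ x * t / N₁ :=
    (ae_nonneg_gammaMeasure _ _).mono fun t ht => by positivity
  rw [integral_prod_max_sub_eq_stopLoss hμ (f := fun t => x * t / N₂) (by fun_prop),
    integral_prod_max_sub_eq_stopLoss hμ (f := fun t => x * t / N₁) (by fun_prop)]
  gcongr _ * ?_
  exact ENNReal.toReal_mono (lintegral_ofReal_stopLoss_ne_top hμ hnonneg)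
    (lintegral_stopLoss_chiSqMeasure_le hμ x hN₁ h)
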